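/- Let A ∈ ℝ^{m×n}, let K ≥ 1 be an integer, and suppose δ ∈ [0,1) satisfies the RIP of order K+1 for A with δ < 1/√(K+1). Let x ∈ ℝⁿ be K-sparse with nonempty support Ω = supp(x), and let S ⊊ Ω with |S| < |Ω|. Then ‖A_{Ω∖S}ᵀ P_S^⊥ A_{Ω∖S} x_{Ω∖S}‖_∞ − ‖A_{Ω^c}ᵀ P_S^⊥ A_{Ω∖S} x_{Ω∖S}‖_∞ ≥ (1 − √(K+1)·δ) · min_{i∈Ω}|x_i|. -/

import Mathlib

open Matrix Finset

/-- The Euclidean (`ℓ₂`) norm of a real vector. -/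
noncomputable def l2norm {ι : Type*} [Fintype ι] (v : ι → ℝ) : ℝ :=
  Real.sqrt (∑ i, v i ^ 2)

/-- The support `{i : x i ≠ 0}` of a vector, as a `Finset`. -/
noncomputable def sparseSupport {n : ℕ} (x : Fin n → ℝ) : Finset (Fin n) :=
  Finset.univ.filter (fun i => x i ≠ 0)

/-- `δ` satisfies the restricted isometry property of order `k` for `A`:
`(1-δ)‖x‖₂² ≤ ‖Ax‖₂² ≤ (1+δ)‖x‖₂²` for all `x` with at most `k` nonzero entries. -/
def RIP {m n : ℕ} (A : Matrix (Fin m) (Fin n) ℝ) (k : ℕ) (δ : ℝ) : Prop :=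
  ∀ x : Fin n → ℝ, (sparseSupport x).card ≤ k →
    (1 - δ) * (∑ i, x i ^ 2) ≤ (∑ i, (A.mulVec x) i ^ 2) ∧
    (∑ i, (A.mulVec x) i ^ 2) ≤ (1 + δ) * (∑ i, x i ^ 2)

/-- The submatrix `A_S` of `A` containing only the columns indexed by `S`. -/
def colSub {m n : ℕ} (A : Matrix (Fin m) (Fin n) ℝ) (S : Finset (Fin n)) :
    Matrix (Fin m) {j // j ∈ S} ℝ :=
  fun i j => A i j.1

/-- The orthogonal complement projector `P_S^⊥ = I - A_S (A_Sᵀ A_S)⁻¹ A_Sᵀ`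
(equal to `I` when `S = ∅`). -/
noncomputable def projPerp {m n : ℕ} (A : Matrix (Fin m) (Fin n) ℝ) (S : Finset (Fin n)) :
    Matrix (Fin m) (Fin m) ℝ :=
  1 - colSub A S * ((colSub A S)ᵀ * colSub A S)⁻¹ * (colSub A S)ᵀ

/-- The subvector `x_T`, extended by zero outside `T` (so that `A_T x_T = A (restrictVec x T)`). -/
def restrictVec {n : ℕ} (x : Fin n → ℝ) (T : Finset (Fin n)) : Fin n → ℝ :=
  fun i => if i ∈ T then x i else 0

/-- `‖(w i)_{i ∈ T}‖_∞ = max_{i ∈ T} |w i|` (equal to `0` when `T = ∅`). -/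
noncomputable def supAbs {n : ℕ} (T : Finset (Fin n)) (w : Fin n → ℝ) : ℝ :=
  sSup ((fun i => |w i|) '' ↑T)

/-!
Put `T = Ω \ S`, `w = Aᵀ P_S^⊥ A x_T` and `c = ‖x_T‖₁`. On the one hand `⟪x_T, w⟫ ≤ c · max_T |w|`.
On the other hand, if `|w|` is maximal over `Ωᶜ` at `j`, then
`⟪x_T, w⟫ - c |w_j| = ⟪P_S^⊥ A x_T, P_S^⊥ A b⟫` with `b = x_T - c · sign(w_j) e_j`.
Since `P_S^⊥ A` inherits the RIP bounds on vectors supported off `S`, polarization bounds this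
inner product below by `(1 - √(K+1) δ) ‖x_T‖²`, because `‖b‖² = ‖x_T‖² + c² ≤ (K+1) ‖x_T‖²`
by Cauchy–Schwarz. Finally `‖x_T‖² ≥ c · min_Ω |x_i|`, and dividing by `c > 0` gives the claim.
-/

section Vectors

lemma sum_sq_eq_dotProduct_self {ι : Type*} [Fintype ι] (v : ι → ℝ) :
    ∑ i, v i ^ 2 = v ⬝ᵥ v := by
  simp [dotProduct, sq]

variable {n : ℕ}

lemma sparseSupport_subset_iff {v : Fin n → ℝ} {W : Finset (Fin n)} :
    sparseSupport v ⊆ W ↔ ∀ i ∉ W, v i = 0 := by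
  simp only [sparseSupport, Finset.subset_iff, Finset.mem_filter, Finset.mem_univ, true_and]
  exact forall_congr' fun i => not_imp_comm

lemma dotProduct_eq_zero_of_disjoint {a b : Fin n → ℝ}
    (h : Disjoint (sparseSupport a) (sparseSupport b)) : a ⬝ᵥ b = 0 := by
  refine Finset.sum_eq_zero fun i _ => ?_
  by_cases ha : a i = 0
  · rw [ha, zero_mul]
  · have hb : i ∉ sparseSupport b :=
      Finset.disjoint_left.mp h (by simpa [sparseSupport] using ha)
    simp_all [sparseSupport]

lemma sparseSupport_restrictVec_subset (x : Fin n → ℝ) (T : Finset (Fin n)) :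
    sparseSupport (restrictVec x T) ⊆ T :=
  sparseSupport_subset_iff.mpr fun _ hi => if_neg hi

lemma restrictVec_dotProduct (x v : Fin n → ℝ) (T : Finset (Fin n)) :
    restrictVec x T ⬝ᵥ v = ∑ i ∈ T, x i * v i := by
  simp [dotProduct, restrictVec, ite_mul, Finset.sum_ite_mem]

lemma restrictVec_dotProduct_self (x : Fin n → ℝ) (T : Finset (Fin n)) :
    restrictVec x T ⬝ᵥ restrictVec x T = ∑ i ∈ T, x i ^ 2 := by
  rw [restrictVec_dotProduct]
  exact Finset.sum_congr rfl fun i hi => by simp [restrictVec, hi, sq]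

lemma sq_sum_abs_le_card_mul_sum_sq (x : Fin n → ℝ) (T : Finset (Fin n)) :
    (∑ i ∈ T, |x i|) ^ 2 ≤ T.card * ∑ i ∈ T, x i ^ 2 := by
  simpa only [sq_abs] using sq_sum_le_card_mul_sum_sq (s := T) (f := fun i => |x i|)

lemma mul_sum_abs_le_sum_sq {x : Fin n → ℝ} {T : Finset (Fin n)} {μ : ℝ}
    (h : ∀ i ∈ T, μ ≤ |x i|) : μ * ∑ i ∈ T, |x i| ≤ ∑ i ∈ T, x i ^ 2 := by
  rw [Finset.mul_sum]
  refine Finset.sum_le_sum fun i hi => ?_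
  rw [← sq_abs, sq]
  exact mul_le_mul_of_nonneg_right (h i hi) (abs_nonneg _)

lemma abs_le_supAbs {T : Finset (Fin n)} (w : Fin n → ℝ) {i : Fin n} (hi : i ∈ T) :
    |w i| ≤ supAbs T w :=
  le_csSup (T.finite_toSet.image _).bddAbove ⟨i, hi, rfl⟩

lemma restrictVec_dotProduct_le (x w : Fin n → ℝ) (T : Finset (Fin n)) :
    restrictVec x T ⬝ᵥ w ≤ (∑ i ∈ T, |x i|) * supAbs T w := by
  rw [restrictVec_dotProduct, Finset.sum_mul]
  refine Finset.sum_le_sum fun i hi => ?_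
  calc x i * w i ≤ |x i| * |w i| := (le_abs_self _).trans (abs_mul _ _).le
    _ ≤ |x i| * supAbs T w := mul_le_mul_of_nonneg_left (abs_le_supAbs w hi) (abs_nonneg _)

lemma exists_dotProduct_eq_supAbs (T : Finset (Fin n)) (w : Fin n → ℝ) :
    ∃ e : Fin n → ℝ, sparseSupport e ⊆ T ∧ (sparseSupport e).card ≤ 1 ∧ e ⬝ᵥ e ≤ 1 ∧
      e ⬝ᵥ w = supAbs T w := by
  rcases T.eq_empty_or_nonempty with rfl | hT
  · exact ⟨0, by simp [sparseSupport], by simp [sparseSupport], by simp, by simp [supAbs]⟩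
  obtain ⟨j, hj, hmax⟩ := T.exists_max_image (fun i => |w i|) hT
  have hsup : supAbs T w = |w j| :=
    le_antisymm (csSup_le (hT.to_set.image _) fun _ ⟨i, hi, h⟩ => h ▸ hmax i hi)
      (abs_le_supAbs w hj)
  have hsupp : sparseSupport (Pi.single j (SignType.sign (w j) : ℝ)) ⊆ {j} :=
    sparseSupport_subset_iff.mpr fun i hi => Pi.single_eq_of_ne (by simpa using hi) _
  refine ⟨Pi.single j (SignType.sign (w j) : ℝ), hsupp.trans (by simpa using hj),
    (Finset.card_le_card hsupp).trans (by simp), ?_, ?_⟩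
  · rw [single_dotProduct, Pi.single_eq_same]
    rcases lt_trichotomy (w j) 0 with h | h | h <;> simp [h]
  · rw [single_dotProduct, hsup, sign_mul_self]

end Vectors

section Projection

variable {m n : ℕ} {A : Matrix (Fin m) (Fin n) ℝ} {S : Finset (Fin n)}

def extendByZero (S : Finset (Fin n)) (z : S → ℝ) : Fin n → ℝ :=
  fun i => if h : i ∈ S then z ⟨i, h⟩ else 0

lemma sparseSupport_extendByZero_subset (z : S → ℝ) : sparseSupport (extendByZero S z) ⊆ S :=
  sparseSupport_subset_iff.mpr fun _ hi => dif_neg hi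

lemma sum_extendByZero (f : Fin n → ℝ → ℝ) (hf : ∀ i, f i 0 = 0) (z : S → ℝ) :
    ∑ i, f i (extendByZero S z i) = ∑ j : S, f j (z j) := by
  rw [← Finset.sum_subset S.subset_univ fun i _ hi => by simp [extendByZero, hi, hf],
    ← Finset.sum_coe_sort]
  simp [extendByZero]

lemma mulVec_extendByZero (A : Matrix (Fin m) (Fin n) ℝ) (z : S → ℝ) :
    A *ᵥ extendByZero S z = colSub A S *ᵥ z :=
  funext fun i => sum_extendByZero (fun j t => A i j * t) (fun _ => mul_zero _) z

lemma extendByZero_dotProduct_self (z : S → ℝ) :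
    extendByZero S z ⬝ᵥ extendByZero S z = z ⬝ᵥ z :=
  sum_extendByZero (fun _ t => t * t) (fun _ => mul_zero _) z

lemma transpose_projPerp : (projPerp A S)ᵀ = projPerp A S := by
  simp [projPerp, Matrix.transpose_sub, Matrix.transpose_mul, Matrix.transpose_nonsing_inv,
    Matrix.mul_assoc]

lemma transpose_colSub_mul_projPerp (h : IsUnit ((colSub A S)ᵀ * colSub A S).det) :
    (colSub A S)ᵀ * projPerp A S = 0 := by
  rw [projPerp, Matrix.mul_sub, Matrix.mul_one, ← Matrix.mul_assoc, ← Matrix.mul_assoc,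
    Matrix.mul_nonsing_inv _ h, Matrix.one_mul, sub_self]

lemma projPerp_mul_self (h : IsUnit ((colSub A S)ᵀ * colSub A S).det) :
    projPerp A S * projPerp A S = projPerp A S := by
  nth_rewrite 1 [projPerp]
  rw [Matrix.sub_mul, Matrix.one_mul, Matrix.mul_assoc, transpose_colSub_mul_projPerp h,
    Matrix.mul_zero, sub_zero]

lemma projPerp_mulVec_dotProduct (h : IsUnit ((colSub A S)ᵀ * colSub A S).det)
    (u y : Fin m → ℝ) :
    (projPerp A S *ᵥ u) ⬝ᵥ (projPerp A S *ᵥ y) = u ⬝ᵥ (projPerp A S *ᵥ y) := by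
  rw [← vecMul_transpose, transpose_projPerp, ← dotProduct_mulVec, mulVec_mulVec,
    projPerp_mul_self h]

lemma projPerp_mulVec_dotProduct_self_le (h : IsUnit ((colSub A S)ᵀ * colSub A S).det)
    (y : Fin m → ℝ) :
    (projPerp A S *ᵥ y) ⬝ᵥ (projPerp A S *ᵥ y) ≤ y ⬝ᵥ y := by
  set p := projPerp A S *ᵥ y
  have hp : p ⬝ᵥ p = y ⬝ᵥ p := projPerp_mulVec_dotProduct h y y
  have hyp : 0 ≤ (y - p) ⬝ᵥ (y - p) := Fintype.sum_nonneg fun _ => mul_self_nonneg _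
  rw [sub_dotProduct, dotProduct_sub, dotProduct_sub, dotProduct_comm p y] at hyp
  linarith

lemma exists_projPerp_mulVec_mulVec_eq (z : Fin n → ℝ) :
    ∃ q, sparseSupport q ⊆ S ∧ projPerp A S *ᵥ (A *ᵥ z) = A *ᵥ (z - q) :=
  ⟨extendByZero S ((((colSub A S)ᵀ * colSub A S)⁻¹ * (colSub A S)ᵀ) *ᵥ (A *ᵥ z)),
    sparseSupport_extendByZero_subset _, by
    rw [mulVec_sub, mulVec_extendByZero, projPerp, sub_mulVec, one_mulVec]
    simp only [mulVec_mulVec, Matrix.mul_assoc]⟩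

end Projection

/-- Polarization, `4 s ⟪B a, B b⟫ = ‖B (s a + b)‖² - ‖B (s a - b)‖²`; the free scale `s`
replaces the usual normalization of `a` and `b`. -/
lemma le_mulVec_dotProduct_mulVec_of_near_isometry {m n : ℕ} {B : Matrix (Fin m) (Fin n) ℝ}
    {a b : Fin n → ℝ} {s δ : ℝ}
    (hlow : (1 - δ) * ((s • a + b) ⬝ᵥ (s • a + b)) ≤
      (B *ᵥ (s • a + b)) ⬝ᵥ (B *ᵥ (s • a + b)))
    (hup : (B *ᵥ (s • a - b)) ⬝ᵥ (B *ᵥ (s • a - b)) ≤ (1 + δ) * ((s • a - b) ⬝ᵥ (s • a - b))) :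
    2 * s * (a ⬝ᵥ b) - δ * (s ^ 2 * (a ⬝ᵥ a) + b ⬝ᵥ b) ≤ 2 * s * ((B *ᵥ a) ⬝ᵥ (B *ᵥ b)) := by
  simp only [mulVec_add, mulVec_sub, mulVec_smul, add_dotProduct, dotProduct_add, sub_dotProduct,
    dotProduct_sub, smul_dotProduct, dotProduct_smul, smul_eq_mul, dotProduct_comm b a,
    dotProduct_comm (B *ᵥ b) (B *ᵥ a)] at hlow hup
  linear_combination (hlow + hup) / 2

namespace RIP

variable {m n : ℕ} {A : Matrix (Fin m) (Fin n) ℝ} {k : ℕ} {δ : ℝ} {S W : Finset (Fin n)}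

lemma dotProduct_bounds (hA : RIP A k δ) {x : Fin n → ℝ} (hx : (sparseSupport x).card ≤ k) :
    (1 - δ) * (x ⬝ᵥ x) ≤ (A *ᵥ x) ⬝ᵥ (A *ᵥ x) ∧ (A *ᵥ x) ⬝ᵥ (A *ᵥ x) ≤ (1 + δ) * (x ⬝ᵥ x) := by
  simpa only [sum_sq_eq_dotProduct_self] using hA x hx

lemma posDef_gram (hA : RIP A k δ) (hδ : δ < 1) (hS : S.card ≤ k) :
    ((colSub A S)ᵀ * colSub A S).PosDef := by
  refine Matrix.PosDef.of_dotProduct_mulVec_pos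
    (by simpa using Matrix.isHermitian_conjTranspose_mul_self (colSub A S)) fun v hv => ?_
  have hlow := (hA.dotProduct_bounds
    ((Finset.card_le_card (sparseSupport_extendByZero_subset v)).trans hS)).1
  rw [extendByZero_dotProduct_self, mulVec_extendByZero] at hlow
  have hv : 0 < v ⬝ᵥ v := (Fintype.sum_nonneg fun _ => mul_self_nonneg _).lt_of_ne'
    (dotProduct_self_eq_zero.not.mpr hv)
  rw [star_trivial, ← mulVec_mulVec, dotProduct_mulVec, vecMul_transpose]
  nlinarith

lemma one_sub_mul_le_projPerp_mulVec_dotProduct_self (hA : RIP A k δ) (hδ : δ ≤ 1)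
    (hWS : Disjoint W S) (hW : W.card + S.card ≤ k) {z : Fin n → ℝ} (hz : sparseSupport z ⊆ W) :
    (1 - δ) * (z ⬝ᵥ z) ≤ (projPerp A S *ᵥ (A *ᵥ z)) ⬝ᵥ (projPerp A S *ᵥ (A *ᵥ z)) := by
  obtain ⟨q, hq, hPz⟩ := exists_projPerp_mulVec_mulVec_eq (A := A) z
  have hzq : z ⬝ᵥ q = 0 :=
    dotProduct_eq_zero_of_disjoint (Finset.disjoint_of_subset_left hz hWS |>.mono_right hq)
  have hcard : (sparseSupport (z - q)).card ≤ k := by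
    refine (Finset.card_le_card (s := sparseSupport (z - q)) (t := W ∪ S) ?_).trans
      ((Finset.card_union_le W S).trans hW)
    rw [sparseSupport_subset_iff] at hz hq ⊢
    intro i hi
    rw [Finset.mem_union, not_or] at hi
    simp [hz i hi.1, hq i hi.2]
  have hq0 : 0 ≤ q ⬝ᵥ q := Fintype.sum_nonneg fun _ => mul_self_nonneg _
  have hlow := (hA.dotProduct_bounds hcard).1
  rw [hPz]
  rw [sub_dotProduct, dotProduct_sub, dotProduct_sub, dotProduct_comm q z, hzq] at hlow
  nlinarith

lemma projPerp_mulVec_dotProduct_self_le_one_add_mul (hA : RIP A k δ)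
    (h : IsUnit ((colSub A S)ᵀ * colSub A S).det) {z : Fin n → ℝ}
    (hz : (sparseSupport z).card ≤ k) :
    (projPerp A S *ᵥ (A *ᵥ z)) ⬝ᵥ (projPerp A S *ᵥ (A *ᵥ z)) ≤ (1 + δ) * (z ⬝ᵥ z) :=
  (projPerp_mulVec_dotProduct_self_le h _).trans (hA.dotProduct_bounds hz).2

lemma le_projPerp_mulVec_dotProduct (hA : RIP A k δ) (hδ : δ ≤ 1)
    (h : IsUnit ((colSub A S)ᵀ * colSub A S).det) (hWS : Disjoint W S)
    (hW : W.card + S.card ≤ k) {a b : Fin n → ℝ} (ha : sparseSupport a ⊆ W)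
    (hb : sparseSupport b ⊆ W) (s : ℝ) :
    2 * s * (a ⬝ᵥ b) - δ * (s ^ 2 * (a ⬝ᵥ a) + b ⬝ᵥ b) ≤
      2 * s * ((projPerp A S *ᵥ (A *ᵥ a)) ⬝ᵥ (projPerp A S *ᵥ (A *ᵥ b))) := by
  rw [sparseSupport_subset_iff] at ha hb
  have hadd : sparseSupport (s • a + b) ⊆ W :=
    sparseSupport_subset_iff.mpr fun i hi => by simp [ha i hi, hb i hi]
  have hsub : sparseSupport (s • a - b) ⊆ W :=
    sparseSupport_subset_iff.mpr fun i hi => by simp [ha i hi, hb i hi]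
  have hlow := hA.one_sub_mul_le_projPerp_mulVec_dotProduct_self hδ hWS hW hadd
  have hup := hA.projPerp_mulVec_dotProduct_self_le_one_add_mul h
    ((Finset.card_le_card hsub).trans (by omega))
  simp only [mulVec_mulVec] at hlow hup ⊢
  exact le_mulVec_dotProduct_mulVec_of_near_isometry hlow hup

lemma le_dotProduct_sub_mul_dotProduct (hA : RIP A k δ) (hδ0 : 0 ≤ δ) (hδ : δ ≤ 1)
    (h : IsUnit ((colSub A S)ᵀ * colSub A S).det) (hWS : Disjoint W S)
    (hW : W.card + S.card ≤ k) {a e : Fin n → ℝ} (ha : sparseSupport a ⊆ W)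
    (he : sparseSupport e ⊆ W) (hae : a ⬝ᵥ e = 0) (hee : e ⬝ᵥ e ≤ 1) {s c : ℝ} (hs : 0 < s)
    (hc : c ^ 2 ≤ (s ^ 2 - 1) * (a ⬝ᵥ a)) :
    (1 - s * δ) * (a ⬝ᵥ a) ≤
      a ⬝ᵥ (Aᵀ *ᵥ (projPerp A S *ᵥ (A *ᵥ a))) - c * (e ⬝ᵥ (Aᵀ *ᵥ (projPerp A S *ᵥ (A *ᵥ a)))) := by
  set b := a - c • e
  have hb : sparseSupport b ⊆ W := by
    rw [sparseSupport_subset_iff] at ha he ⊢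
    intro i hi
    simp [b, ha i hi, he i hi]
  have hab : a ⬝ᵥ b = a ⬝ᵥ a := by simp [b, dotProduct_sub, hae]
  have hbb : b ⬝ᵥ b ≤ s ^ 2 * (a ⬝ᵥ a) := by
    have hbb : b ⬝ᵥ b = a ⬝ᵥ a + c ^ 2 * (e ⬝ᵥ e) := by
      simp only [b, sub_dotProduct, dotProduct_sub, smul_dotProduct, dotProduct_smul, smul_eq_mul,
        hae, dotProduct_comm e a]
      ring
    nlinarith [mul_le_of_le_one_right (sq_nonneg c) hee]
  have hdot : (projPerp A S *ᵥ (A *ᵥ a)) ⬝ᵥ (projPerp A S *ᵥ (A *ᵥ b)) =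
      a ⬝ᵥ (Aᵀ *ᵥ (projPerp A S *ᵥ (A *ᵥ a))) - c * (e ⬝ᵥ (Aᵀ *ᵥ (projPerp A S *ᵥ (A *ᵥ a)))) := by
    rw [dotProduct_comm, projPerp_mulVec_dotProduct h, ← smul_eq_mul, ← smul_dotProduct,
      ← sub_dotProduct, dotProduct_mulVec _ Aᵀ, vecMul_transpose]
  -- at scale `s` both parts of the error `δ (s² ‖a‖² + ‖b‖²)` are at most `δ s² ‖a‖²`
  have hpol := hA.le_projPerp_mulVec_dotProduct hδ h hWS hW ha hb s
  rw [hab, hdot] at hpol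
  refine le_of_mul_le_mul_left ?_ (by positivity : 0 < 2 * s)
  nlinarith [mul_le_mul_of_nonneg_left hbb hδ0]

end RIP

theorem omp_lemma_min_bound_general {m n : ℕ} (A : Matrix (Fin m) (Fin n) ℝ) (K : ℕ)
    (δ : ℝ) (hδ0 : 0 ≤ δ) (hδlt1 : δ < 1)
    (hδ : δ < 1 / Real.sqrt ((K : ℝ) + 1))
    (hRIP : RIP A (K + 1) δ)
    (x : Fin n → ℝ) (hx : (sparseSupport x).card ≤ K)
    (hne : (sparseSupport x).Nonempty)
    (S : Finset (Fin n)) (hS : S ⊆ sparseSupport x)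
    (hcard : S.card < (sparseSupport x).card) :
    supAbs (sparseSupport x \ S)
        (Aᵀ.mulVec ((projPerp A S).mulVec (A.mulVec (restrictVec x (sparseSupport x \ S)))))
      - supAbs ((sparseSupport x)ᶜ)
        (Aᵀ.mulVec ((projPerp A S).mulVec (A.mulVec (restrictVec x (sparseSupport x \ S)))))
      ≥ (1 - Real.sqrt ((K : ℝ) + 1) * δ)
          * (sparseSupport x).inf' hne (fun i => |x i|) := by
  set Ω := sparseSupport x
  set T := Ω \ S
  set w := Aᵀ *ᵥ (projPerp A S *ᵥ (A *ᵥ restrictVec x T))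
  set c := ∑ i ∈ T, |x i|
  set s := Real.sqrt ((K : ℝ) + 1)
  have hTS : T.card + S.card = Ω.card := Finset.card_sdiff_add_card_eq_card hS
  have hdet := (hRIP.posDef_gram hδlt1 (S := S) (by omega)).det_pos.ne'.isUnit
  obtain ⟨e, heΩ, he1, hee, hew⟩ := exists_dotProduct_eq_supAbs Ωᶜ w
  have hWS : Disjoint (T ∪ sparseSupport e) S :=
    Finset.disjoint_union_left.mpr ⟨Finset.sdiff_disjoint,
      (disjoint_compl_left.mono_left heΩ).mono_right hS⟩
  have hW : (T ∪ sparseSupport e).card + S.card ≤ K + 1 := by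
    have := Finset.card_union_le T (sparseSupport e)
    omega
  have hxe : restrictVec x T ⬝ᵥ e = 0 := dotProduct_eq_zero_of_disjoint
    (((disjoint_compl_right.mono_left Finset.sdiff_subset).mono_right heΩ).mono_left
      (sparseSupport_restrictVec_subset x T))
  have hc2 : c ^ 2 ≤ (s ^ 2 - 1) * (restrictVec x T ⬝ᵥ restrictVec x T) := by
    rw [restrictVec_dotProduct_self, Real.sq_sqrt (by positivity), add_sub_cancel_right]
    refine (sq_sum_abs_le_card_mul_sum_sq x T).trans ?_
    gcongr
    exact_mod_cast (by omega : T.card ≤ K)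
  have hgap := hRIP.le_dotProduct_sub_mul_dotProduct hδ0 hδlt1.le hdet hWS hW
    (sparseSupport_restrictVec_subset x T |>.trans Finset.subset_union_left)
    Finset.subset_union_right hxe hee (Real.sqrt_pos.mpr (by positivity)) hc2
  rw [hew, restrictVec_dotProduct_self] at hgap
  have hmin : Ω.inf' hne (fun i => |x i|) * c ≤ ∑ i ∈ T, x i ^ 2 :=
    mul_sum_abs_le_sum_sq fun i hi => Finset.inf'_le _ (Finset.sdiff_subset hi)
  have hc : 0 < c := Finset.sum_pos
    (fun i hi => abs_pos.mpr (Finset.mem_filter.mp (Finset.sdiff_subset hi)).2)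
    (Finset.card_pos.mp (by omega))
  have hsδ : s * δ < 1 := by
    rwa [lt_div_iff₀ (Real.sqrt_pos.mpr (by positivity)), mul_comm] at hδ
  rw [ge_iff_le, ← mul_le_mul_iff_of_pos_right hc]
  nlinarith [restrictVec_dotProduct_le x w T]

/-- For `S ⊊ Ω = supp(x)` and `δ < 1/√(K+1)`:
`‖A_{Ω∖S}ᵀ P_S^⊥ A_{Ω∖S} x_{Ω∖S}‖_∞ − ‖A_{Ω^c}ᵀ P_S^⊥ A_{Ω∖S} x_{Ω∖S}‖_∞
  ≥ (1 − √(K+1)·δ) · min_{i∈Ω}|x_i|`. -/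
theorem omp_lemma_min_bound {m n : ℕ} (A : Matrix (Fin m) (Fin n) ℝ) (K : ℕ) (hK : 1 ≤ K)
    (δ : ℝ) (hδ0 : 0 ≤ δ) (hδlt1 : δ < 1)
    (hδ : δ < 1 / Real.sqrt ((K : ℝ) + 1))
    (hRIP : RIP A (K + 1) δ)
    (x : Fin n → ℝ) (hx : (sparseSupport x).card ≤ K)
    (hne : (sparseSupport x).Nonempty)
    (S : Finset (Fin n)) (hS : S ⊆ sparseSupport x)
    (hcard : S.card < (sparseSupport x).card) :
    supAbs (sparseSupport x \ S)
        (Aᵀ.mulVec ((projPerp A S).mulVec (A.mulVec (restrictVec x (sparseSupport x \ S)))))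
      - supAbs ((sparseSupport x)ᶜ)
        (Aᵀ.mulVec ((projPerp A S).mulVec (A.mulVec (restrictVec x (sparseSupport x \ S)))))
      ≥ (1 - Real.sqrt ((K : ℝ) + 1) * δ)
          * (sparseSupport x).inf' hne (fun i => |x i|) :=
  omp_lemma_min_bound_general A K δ hδ0 hδlt1 hδ hRIP x hx hne S hS hcard
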